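/- Let u : ℕ^n → K be a sequence whose ideal of C-relations I ⊆ K[x_1,...,x_n] is zero-dimensional with (finite) staircase S for a monomial ordering ≺, i.e., S is the set of monomials not in LM(I). Then the multi-Hankel matrix H_{S,S}, whose entry at row s and column s' is [s·s']_u, is invertible; moreover for every monomial m ∉ S, the column H_{S,{m}} is a K-linear combination of the columns of H_{S,S}. -/

import Mathlib

/-!
The rows `hankelRow u b = (u (b + i))ᵢ` of the infinite Hankel matrix of `u` satisfy the linear
relation `∑ₜ gₜ • hankelRow u t = 0` exactly when `g ∈ I`. Reducing the leading monomial of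
such relations shows, by well-founded induction along `≺`, that every row lies in the span of
the staircase rows; a relation among the staircase rows would be a nonzero element of `I` whose
leading monomial lies in `S`, so these rows are independent. A kernel vector `v` of `H_{S,S}`
defines the functional `w ↦ ∑ₛ vₛ wₛ`, which vanishes on the staircase rows and hence on all
rows; by the symmetry `u (s + i) = u (i + s)` this says `∑ₛ vₛ • hankelRow u s = 0`, so `v = 0`.
-/

open MvPolynomial Matrix

namespace MvPolynomial

variable {σ R : Type*} [CommSemiring R]

theorem sum_coeff_mul_monomial_one (u : (σ →₀ ℕ) → R) (g : MvPolynomial σ R) (i : σ →₀ ℕ) :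
    ((AddMonoidAlgebra.coeff (g * monomial i 1)).sum fun s c => c * u s) =
      ∑ t ∈ g.support, coeff t g * u (t + i) := by
  rw [← sum_def (b := fun t c => c * u (t + i))]
  induction g using MvPolynomial.induction_on' with
  | monomial t c => rw [monomial_mul, mul_one, sum_monomial_eq (by simp), sum_monomial_eq (by simp)]
  | add p q hp hq =>
    rw [add_mul, AddMonoidAlgebra.coeff_add, AddMonoidAlgebra.coeff_add,
      Finsupp.sum_add_index' (fun _ => zero_mul _) (fun _ _ _ => add_mul _ _ _),
      Finsupp.sum_add_index' (fun _ => zero_mul _) (fun _ _ _ => add_mul _ _ _), hp, hq]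

end MvPolynomial

noncomputable def hankelRow {σ R : Type*} (u : (σ →₀ ℕ) → R) (b : σ →₀ ℕ) : (σ →₀ ℕ) → R :=
  fun i => u (b + i)

theorem forall_sum_coeff_mul_monomial_one_eq_zero_iff {σ R : Type*} [CommSemiring R]
    (u : (σ →₀ ℕ) → R) (g : MvPolynomial σ R) :
    (∀ i, ((AddMonoidAlgebra.coeff (g * monomial i 1)).sum fun s c => c * u s) = 0) ↔
      ∑ t ∈ g.support, coeff t g • hankelRow u t = 0 := by
  simp [funext_iff, Finset.sum_apply, sum_coeff_mul_monomial_one, hankelRow]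

namespace MonomialOrder

variable {σ K V : Type*} [Field K] [AddCommGroup V] [Module K V] (m : MonomialOrder σ)

theorem degree_eq_iff {R : Type*} [CommSemiring R] {g : MvPolynomial σ R} (hg : g ≠ 0)
    {s : σ →₀ ℕ} : m.degree g = s ↔ s ∈ g.support ∧ ∀ t ∈ g.support, t ≼[m] s := by
  constructor
  · rintro rfl
    exact ⟨m.degree_mem_support hg, fun t ht => m.le_degree ht⟩
  · rintro ⟨hs, hmax⟩
    exact m.toSyn.injective (le_antisymm (m.degree_le_iff.mpr hmax) (m.le_degree hs))

theorem mem_span_image_of_forall_notMem {w : (σ →₀ ℕ) → V} {S : Set (σ →₀ ℕ)}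
    (h : ∀ b ∉ S, ∃ g : MvPolynomial σ K, g ≠ 0 ∧ m.degree g = b ∧
      ∑ t ∈ g.support, coeff t g • w t = 0) (b : σ →₀ ℕ) :
    w b ∈ Submodule.span K (w '' S) := by
  classical
  induction b using (InvImage.wf m.toSyn m.wellFoundedLT_syn.wf).induction with
  | _ b ih =>
  by_cases hb : b ∈ S
  · exact Submodule.subset_span (Set.mem_image_of_mem w hb)
  obtain ⟨g, hg, rfl, hrel⟩ := h b hb
  rw [← Finset.add_sum_erase _ _ (m.degree_mem_support hg)] at hrel
  rw [← inv_smul_smul₀ (m.coeff_degree_ne_zero_iff.mpr hg) (w _), eq_neg_of_add_eq_zero_left hrel]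
  refine Submodule.smul_mem _ _ (Submodule.neg_mem _ (Submodule.sum_mem _ fun t ht => ?_))
  refine Submodule.smul_mem _ _ (ih t ?_)
  exact lt_of_le_of_ne (m.le_degree (Finset.mem_of_mem_erase ht))
    (m.toSyn.injective.ne (Finset.ne_of_mem_erase ht))

theorem linearIndepOn_of_forall_degree_notMem {w : (σ →₀ ℕ) → V} {S : Set (σ →₀ ℕ)}
    (h : ∀ g : MvPolynomial σ K, g ≠ 0 → ∑ t ∈ g.support, coeff t g • w t = 0 →
      m.degree g ∉ S) :
    LinearIndepOn K w S := by
  refine linearIndepOn_iff.mpr fun l hlS hl => ?_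
  by_contra hl0
  set g : MvPolynomial σ K := AddMonoidAlgebra.ofCoeff l
  have hg : g ≠ 0 := fun h0 => hl0 (congrArg AddMonoidAlgebra.coeff h0)
  exact h g hg hl (hlS (m.degree_mem_support hg))

end MonomialOrder

theorem sum_smul_hankelRow_eq_zero_of_mulVec_eq_zero {σ R : Type*} [CommRing R]
    {u : (σ →₀ ℕ) → R} {S : Finset (σ →₀ ℕ)}
    (hspan : ∀ b, hankelRow u b ∈ Submodule.span R (hankelRow u '' S)) {v : S → R}
    (hv : (Matrix.of fun s s' : S => u (s.1 + s'.1)) *ᵥ v = 0) :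
    ∑ s : S, v s • hankelRow u s = 0 := by
  set φ : ((σ →₀ ℕ) → R) →ₗ[R] R := ∑ s : S, v s • LinearMap.proj s.1
  have hφ : ∀ w, φ w = ∑ s : S, v s * w s := fun w => by simp [φ]
  have hker : Submodule.span R (hankelRow u '' S) ≤ LinearMap.ker φ := by
    rw [Submodule.span_le]
    rintro _ ⟨s₀, hs₀, rfl⟩
    simpa [hφ, hankelRow, Matrix.mulVec, dotProduct, mul_comm] using congrFun hv ⟨s₀, hs₀⟩
  funext i
  simpa [hφ, hankelRow, add_comm] using hker (hspan i)

theorem isUnit_det_hankel_of_linearIndepOn {σ K : Type*} [DecidableEq σ] [Field K]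
    {u : (σ →₀ ℕ) → K} {S : Finset (σ →₀ ℕ)} (hind : LinearIndepOn K (hankelRow u) (S : Set _))
    (hspan : ∀ b, hankelRow u b ∈ Submodule.span K (hankelRow u '' S)) :
    IsUnit (Matrix.of fun s s' : S => u (s.1 + s'.1)).det := by
  rw [isUnit_iff_ne_zero, Ne, ← Matrix.exists_mulVec_eq_zero_iff]
  rintro ⟨v, hv0, hv⟩
  exact hv0 (funext (Fintype.linearIndependent_iff.mp hind v
    (sum_smul_hankelRow_eq_zero_of_mulVec_eq_zero hspan hv)))

/-- Let `u : ℕ^n → K` be a table whose ideal `I` of C-relations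
is zero-dimensional with finite staircase `S` for a monomial ordering (i.e. `S`
is the set of monomials which are not leading monomials of nonzero elements
of `I`).  Then the multi-Hankel matrix `H_{S,S}` with entries `u_{s+s'}` is
invertible, and for every monomial `b ∉ S` the column `H_{S,{b}}` is a linear
combination of the columns of `H_{S,S}`. -/
theorem multiHankel_staircase_invertible
    (K : Type*) [Field K] (n : ℕ) (u : ((Fin n) →₀ ℕ) → K)
    (m : MonomialOrder (Fin n))
    (I : Set (MvPolynomial (Fin n) K))
    (hI : I = {g : MvPolynomial (Fin n) K | ∀ i : (Fin n) →₀ ℕ,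
      ((AddMonoidAlgebra.coeff (g * monomial i (1 : K))).sum fun s c => c * u s) = 0})
    (S : Finset ((Fin n) →₀ ℕ))
    (hS : ∀ s : (Fin n) →₀ ℕ, s ∈ S ↔
      ¬ ∃ g ∈ I, g ≠ 0 ∧ s ∈ g.support ∧
        ∀ s' ∈ g.support, m.toSyn s' ≤ m.toSyn s) :
    IsUnit (Matrix.of fun s s' : S => u (s.1 + s'.1)).det ∧
    ∀ b : (Fin n) →₀ ℕ, b ∉ S → ∃ c : S → K,
      ∀ s : S, u (s.1 + b) = ∑ s' : S, c s' * u (s.1 + s'.1) := by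
  subst hI
  have hspan : ∀ b, hankelRow u b ∈ Submodule.span K (hankelRow u '' S) :=
    m.mem_span_image_of_forall_notMem fun b hb => by
      obtain ⟨g, hrel, hg, hbg, hmax⟩ := not_not.mp ((hS b).not.mp hb)
      exact ⟨g, hg, (m.degree_eq_iff hg).mpr ⟨hbg, hmax⟩,
        (forall_sum_coeff_mul_monomial_one_eq_zero_iff u g).mp hrel⟩
  have hind : LinearIndepOn K (hankelRow u) (S : Set _) :=
    m.linearIndepOn_of_forall_degree_notMem fun g hg hrel hdeg =>
      (hS _).mp hdeg ⟨g, (forall_sum_coeff_mul_monomial_one_eq_zero_iff u g).mpr hrel, hg,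
        m.degree_mem_support hg, fun t ht => m.le_degree ht⟩
  refine ⟨isUnit_det_hankel_of_linearIndepOn hind hspan, fun b _ => ?_⟩
  obtain ⟨c, hc⟩ := (Fintype.mem_span_image_iff_exists_fun K).mp (hspan b)
  exact ⟨c, fun s => by simpa [hankelRow, add_comm] using (congrFun hc s).symm⟩
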